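/- arXiv:math/0201285 — 2 statements merged into one kernel-verified Lean document; each statement's English description precedes it below -/
import Mathlib

section
/- Let (R_i), i = 1,…,n (n ≥ 1), be a profile of total quasi-orders (complete, reflexive, transitive relations) on a set X. Define π(a,b) = p_{ab}/(p_{ab}+p_{ba}) if p_{ab}+p_{ba} > 0 and π(a,b) = 1 otherwise (the convention 0/0 := 1), and set d_P(a,b) = 1 − π(a,b). Then d_P satisfies the triangle inequality: for all x, y, z ∈ X, d_P(x,y) + d_P(y,z) ≥ d_P(x,z). -/
namespace SC

/-- `p_{ab}`: the number of individuals `i` with `a P_i b` (strict preference). -/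
noncomputable def pp {X : Type*} {n : ℕ} (R : Fin n → X → X → Prop) (a b : X) : ℕ :=
  Nat.card {i : Fin n // R i a b ∧ ¬ R i b a}

/-- `π(a,b) = p_{ab}/(p_{ab}+p_{ba})`, with the convention `0/0 := 1`. -/
noncomputable def piP {X : Type*} {n : ℕ} (R : Fin n → X → X → Prop) (a b : X) : ℝ :=
  if pp R a b + pp R b a = 0 then 1
  else (pp R a b : ℝ) / ((pp R a b : ℝ) + (pp R b a : ℝ))

end SC

/-!
With `d(a,b) = p_{ba}/(p_{ba}+p_{ab})`, the strict part of a total preorder is negatively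
transitive, so `p_{zx} ≤ p_{yx} + p_{zy}` and cyclically. Hence, putting `S = p_{yx} + p_{zy} + p_{xz}`,
`d(x,z) ≤ (p_{yx} + p_{zy}) / S = p_{yx}/S + p_{zy}/S ≤ d(x,y) + d(y,z)`, the last step because
both denominators `p_{yx} + p_{xy}` and `p_{zy} + p_{yz}` are at most `S`.
-/

lemma div_add_le_div_add {e t f : ℝ} (he : 0 ≤ e) (hf : 0 ≤ f) (h : e ≤ t) :
    e / (e + f) ≤ t / (t + f) := by
  rcases (add_nonneg he hf).eq_or_lt with hef | hef
  · rw [← hef, div_zero]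
    exact div_nonneg (he.trans h) (by linarith)
  · rw [div_le_div_iff₀ hef (by linarith)]
    nlinarith

lemma div_le_div_add_of_add_le {a b s : ℝ} (ha : 0 ≤ a) (hb : 0 ≤ b) (h : a + b ≤ s) :
    a / s ≤ a / (a + b) := by
  rcases ha.eq_or_lt with rfl | ha
  · simp
  · exact div_le_div_of_nonneg_left ha.le (by linarith) h

lemma div_add_le_div_add_add_div_add {a b c d e f : ℝ} (ha : 0 ≤ a) (hb : 0 ≤ b)
    (hc : 0 ≤ c) (hd : 0 ≤ d) (he : 0 ≤ e) (hf : 0 ≤ f)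
    (hace : e ≤ a + c) (hbcf : b ≤ c + f) (hdaf : d ≤ f + a) :
    e / (e + f) ≤ a / (a + b) + c / (c + d) :=
  calc e / (e + f) ≤ (a + c) / (a + c + f) := div_add_le_div_add he hf hace
    _ = a / (a + c + f) + c / (a + c + f) := add_div _ _ _
    _ ≤ a / (a + b) + c / (c + d) :=
      add_le_add (div_le_div_add_of_add_le ha hb (by linarith))
        (div_le_div_add_of_add_le hc hd (by linarith))

lemma Nat.card_subtype_le_add {ι : Type*} [Finite ι] {p q r : ι → Prop}
    (h : ∀ i, p i → q i ∨ r i) :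
    Nat.card {i // p i} ≤ Nat.card {i // q i} + Nat.card {i // r i} :=
  calc {i | p i}.ncard ≤ ({i | q i} ∪ {i | r i}).ncard := Set.ncard_le_ncard h
    _ ≤ {i | q i}.ncard + {i | r i}.ncard := Set.ncard_union_le _ _

lemma strict_or_strict_of_strict {X : Type*} {r : X → X → Prop}
    (htotal : ∀ a b, r a b ∨ r b a) (htrans : Transitive r) {x z : X}
    (hzx : r z x ∧ ¬ r x z) (y : X) :
    (r y x ∧ ¬ r x y) ∨ (r z y ∧ ¬ r y z) := by
  by_contra! hcon
  have hxy : r x y := (htotal x y).elim id hcon.1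
  have hyz : r y z := (htotal y z).elim id hcon.2
  exact hzx.2 (htrans hxy hyz)

namespace SC

variable {X : Type*} {n : ℕ} (R : Fin n → X → X → Prop)

lemma one_sub_piP (a b : X) :
    1 - piP R a b = (pp R b a : ℝ) / ((pp R b a : ℝ) + (pp R a b : ℝ)) := by
  unfold piP
  split_ifs with h
  · simp [Nat.add_eq_zero_iff.mp h]
  · have hne : (pp R a b : ℝ) + pp R b a ≠ 0 := mod_cast h
    rw [add_comm (pp R b a : ℝ), eq_div_iff hne, sub_mul, div_mul_cancel₀ _ hne]
    ring

lemma pp_le_pp_add_pp (htotal : ∀ i, ∀ a b : X, R i a b ∨ R i b a)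
    (htrans : ∀ i, Transitive (R i)) (x y z : X) :
    pp R z x ≤ pp R y x + pp R z y :=
  Nat.card_subtype_le_add fun i hi => strict_or_strict_of_strict (htotal i) (htrans i) hi y

end SC

open SC in
theorem stmt18_general {X : Type*} {n : ℕ}
    (R : Fin n → X → X → Prop)
    (htotal : ∀ i, ∀ a b : X, R i a b ∨ R i b a)
    (htrans : ∀ i, Transitive (R i)) :
    ∀ x y z : X, (1 - piP R x y) + (1 - piP R y z) ≥ 1 - piP R x z := by
  intro x y z
  have htri (a b c : X) : (pp R c a : ℝ) ≤ pp R b a + pp R c b :=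
    mod_cast pp_le_pp_add_pp R htotal htrans a b c
  rw [ge_iff_le, one_sub_piP, one_sub_piP, one_sub_piP]
  exact div_add_le_div_add_add_div_add (by positivity) (by positivity) (by positivity)
    (by positivity) (by positivity) (by positivity) (htri x y z) (htri y z x) (htri z x y)

open SC in
/-- for a profile of total quasi-orders, `d_P(a,b) = 1 − π(a,b)` satisfies
the triangle inequality. -/
theorem stmt18 {X : Type*} {n : ℕ} (hn : 1 ≤ n)
    (R : Fin n → X → X → Prop)
    (hrefl : ∀ i, Reflexive (R i))
    (htotal : ∀ i, ∀ a b : X, R i a b ∨ R i b a)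
    (htrans : ∀ i, Transitive (R i)) :
    ∀ x y z : X, (1 - piP R x y) + (1 - piP R y z) ≥ 1 - piP R x z :=
  stmt18_general R htotal htrans
end

section
/- Let (R_i), i = 1,…,n (n ≥ 1), be a profile of total quasi-orders (complete, reflexive, transitive relations) on a set X. Then for all a, b ∈ X one has r_{ab} + r_{ba} ≥ n > 0, and the function d_R(a,b) = 1 − r_{ab}/(r_{ab}+r_{ba}) satisfies the triangle inequality: for all x, y, z ∈ X, d_R(x,y) + d_R(y,z) ≥ d_R(x,z). -/
namespace SC

/-- `r_{ab}`: the number of individuals `i` with `a R_i b`. -/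
noncomputable def rr {X : Type*} {n : ℕ} (R : Fin n → X → X → Prop) (a b : X) : ℕ :=
  Nat.card {i : Fin n // R i a b}

/-- `d_R(a,b) = 1 − r_{ab}/(r_{ab}+r_{ba})`. -/
noncomputable def dR {X : Type*} {n : ℕ} (R : Fin n → X → X → Prop) (a b : X) : ℝ :=
  1 - (rr R a b : ℝ) / ((rr R a b : ℝ) + (rr R b a : ℝ))

end SC

/-!
Write `t_{ab}` for the number of individuals indifferent between `a` and `b`. By totality
`r_{ab} + r_{ba} = n + t_{ab}`, so `d_R(a,b) = r_{ba} / (n + t_{ab})`, and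
`r_{ba} = b_{ab} + t_{ab}` where `b_{ab} ≤ n` counts those strictly preferring `b` to `a`.
An individual with `z R_i x` either strictly prefers `y` to `x`, or `z` to `y`, or has
`x R_i y R_i z R_i x`, i.e. is indifferent among all three; with `τ` the number of the latter,
`r_{zx} ≤ b_{xy} + b_{yz} + τ`. Since `τ` is at most every `t`, and `(b + t)/(n + t)` is
increasing in `t` when `b ≤ n`,
`d_R(x,z) ≤ r_{zx}/(n + τ) ≤ (b_{xy} + τ)/(n + τ) + (b_{yz} + τ)/(n + τ) ≤ d_R(x,y) + d_R(y,z)`.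
-/

theorem add_div_add_le_add_div_add {b n s t : ℝ} (hb : b ≤ n) (hs : 0 < n + s) (hst : s ≤ t) :
    (b + s) / (n + s) ≤ (b + t) / (n + t) := by
  rw [div_le_div_iff₀ hs (by linarith)]
  nlinarith

theorem div_le_add_div_add_of_le_add_add {n b₁ b₂ t₁ t₂ t₃ u τ : ℝ} (hn : 0 < n) (hτ : 0 ≤ τ)
    (hτ₁ : τ ≤ t₁) (hτ₂ : τ ≤ t₂) (hτ₃ : τ ≤ t₃) (hb₁ : b₁ ≤ n) (hb₂ : b₂ ≤ n) (hu : 0 ≤ u)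
    (hu_le : u ≤ b₁ + b₂ + τ) :
    u / (n + t₃) ≤ (b₁ + t₁) / (n + t₁) + (b₂ + t₂) / (n + t₂) :=
  calc u / (n + t₃) ≤ u / (n + τ) := div_le_div_of_nonneg_left hu (by positivity) (by linarith)
    _ ≤ (b₁ + b₂ + τ) / (n + τ) := div_le_div_of_nonneg_right hu_le (by positivity)
    _ ≤ (b₁ + τ) / (n + τ) + (b₂ + τ) / (n + τ) := by
        rw [← add_div]
        exact div_le_div_of_nonneg_right (by linarith) (by positivity)
    _ ≤ (b₁ + t₁) / (n + t₁) + (b₂ + t₂) / (n + t₂) :=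
        add_le_add (add_div_add_le_add_div_add hb₁ (by positivity) hτ₁)
          (add_div_add_le_add_div_add hb₂ (by positivity) hτ₂)

namespace SC

open Finset Classical

variable {X : Type*} {n : ℕ} {R : Fin n → X → X → Prop}

theorem rr_eq_card (R : Fin n → X → X → Prop) (a b : X) : rr R a b = #{i | R i a b} := by
  simp [rr, Nat.card_eq_fintype_card, Fintype.card_subtype]

theorem rr_eq_card_strict_add_card_indiff (R : Fin n → X → X → Prop) (a b : X) :
    rr R b a = #{i | R i b a ∧ ¬R i a b} + #{i | R i a b ∧ R i b a} := by
  rw [rr_eq_card, ← card_filter_add_card_filter_not (fun i => R i a b), filter_filter,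
    filter_filter, add_comm]
  simp only [and_comm]

theorem rr_add_rr (htotal : ∀ i, ∀ a b : X, R i a b ∨ R i b a) (a b : X) :
    rr R a b + rr R b a = n + #{i | R i a b ∧ R i b a} := by
  have hunion : #{i | R i a b ∨ R i b a} = n := by
    rw [filter_true_of_mem fun i _ => htotal i a b, card_univ, Fintype.card_fin]
  rw [rr_eq_card, rr_eq_card, ← card_union_add_card_inter, ← filter_or, hunion, ← filter_and]

theorem dR_eq_div (hn : 0 < n) (htotal : ∀ i, ∀ a b : X, R i a b ∨ R i b a) (a b : X) :
    dR R a b = rr R b a / (n + #{i | R i a b ∧ R i b a}) := by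
  have hsum : (rr R a b : ℝ) + rr R b a = n + #{i | R i a b ∧ R i b a} := by
    exact_mod_cast rr_add_rr htotal a b
  have hpos : (0 : ℝ) < n + #{i | R i a b ∧ R i b a} := by positivity
  rw [dR, one_sub_div (hsum ▸ hpos.ne'), add_sub_cancel_left, hsum]

theorem rr_le_card_strict_add_card_strict_add_card_cycle
    (htotal : ∀ i, ∀ a b : X, R i a b ∨ R i b a) (x y z : X) :
    rr R z x ≤ #{i | R i y x ∧ ¬R i x y} + #{i | R i z y ∧ ¬R i y z} +
      #{i | R i x y ∧ R i y z ∧ R i z x} :=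
  calc rr R z x = #{i | R i z x} := rr_eq_card R z x
    _ ≤ #({i | (R i y x ∧ ¬R i x y ∨ R i z y ∧ ¬R i y z) ∨ R i x y ∧ R i y z ∧ R i z x}) := by
        refine card_le_card fun i hi => ?_
        simp only [mem_filter, mem_univ, true_and] at hi ⊢
        have := htotal i x y
        have := htotal i y z
        tauto
    _ ≤ _ := by
        rw [filter_or, filter_or]
        exact (card_union_le _ _).trans (add_le_add_left (card_union_le _ _) _)

theorem card_cycle_le_card_indiff {x y z a b : X}
    (h : ∀ i, R i x y → R i y z → R i z x → R i a b ∧ R i b a) :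
    #{i | R i x y ∧ R i y z ∧ R i z x} ≤ #{i | R i a b ∧ R i b a} :=
  card_le_card fun i hi => by
    simp only [mem_filter, mem_univ, true_and] at hi ⊢
    exact h i hi.1 hi.2.1 hi.2.2

theorem dR_le_dR_add_dR (hn : 0 < n) (htotal : ∀ i, ∀ a b : X, R i a b ∨ R i b a)
    (htrans : ∀ i, Transitive (R i)) (x y z : X) : dR R x z ≤ dR R x y + dR R y z := by
  have hstrict_le (a b : X) : (#{i | R i b a ∧ ¬R i a b} : ℝ) ≤ n := by
    exact_mod_cast (card_le_univ _).trans_eq (Fintype.card_fin n)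
  rw [dR_eq_div hn htotal, dR_eq_div hn htotal, dR_eq_div hn htotal,
    rr_eq_card_strict_add_card_indiff R x y, rr_eq_card_strict_add_card_indiff R y z]
  push_cast
  refine div_le_add_div_add_of_le_add_add (τ := #{i | R i x y ∧ R i y z ∧ R i z x})
    (by exact_mod_cast hn) (Nat.cast_nonneg _) ?_ ?_ ?_
    (hstrict_le x y) (hstrict_le y z) (Nat.cast_nonneg _) ?_
  · exact_mod_cast card_cycle_le_card_indiff fun i hxy hyz hzx => ⟨hxy, htrans i hyz hzx⟩
  · exact_mod_cast card_cycle_le_card_indiff fun i hxy hyz hzx => ⟨hyz, htrans i hzx hxy⟩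
  · exact_mod_cast card_cycle_le_card_indiff fun i hxy hyz hzx => ⟨htrans i hxy hyz, hzx⟩
  · exact_mod_cast rr_le_card_strict_add_card_strict_add_card_cycle htotal x y z

end SC

open SC in
theorem stmt19_general {X : Type*} {n : ℕ} (hn : 1 ≤ n)
    (R : Fin n → X → X → Prop)
    (htotal : ∀ i, ∀ a b : X, R i a b ∨ R i b a)
    (htrans : ∀ i, Transitive (R i)) :
    (∀ a b : X, n ≤ rr R a b + rr R b a) ∧ 0 < n ∧
    (∀ x y z : X, dR R x y + dR R y z ≥ dR R x z) :=
  ⟨fun a b => (rr_add_rr htotal a b).symm ▸ Nat.le_add_right _ _, hn,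
    fun x y z => dR_le_dR_add_dR hn htotal htrans x y z⟩

open SC in
/-- for a profile of total quasi-orders, `r_{ab} + r_{ba} ≥ n > 0` for all
`a, b`, and `d_R(a,b) = 1 − r_{ab}/(r_{ab}+r_{ba})` satisfies the triangle inequality. -/
theorem stmt19 {X : Type*} {n : ℕ} (hn : 1 ≤ n)
    (R : Fin n → X → X → Prop)
    (hrefl : ∀ i, Reflexive (R i))
    (htotal : ∀ i, ∀ a b : X, R i a b ∨ R i b a)
    (htrans : ∀ i, Transitive (R i)) :
    (∀ a b : X, n ≤ rr R a b + rr R b a) ∧ 0 < n ∧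
    (∀ x y z : X, dR R x y + dR R y z ≥ dR R x z) :=
  stmt19_general hn R htotal htrans
end
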